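/- arXiv:2409.14647 — 2 statements merged into one kernel-verified Lean document; each statement's English description precedes it below -/
import Mathlib

section
/- Under the laziness penalty slashing scheme with C > W + ε > W > 0, the unique Nash equilibrium in pure strategies is the profile where every provider responds. -/
/-- Payoff of provider `i` under the laziness-penalty slashing scheme. -/
noncomputable def slashPayoff (W C ε : ℝ) {m : ℕ} (i : Fin m) (x : Fin m → Bool) : ℝ :=
  if x i then -W
  else if ∃ j, j ≠ i ∧ x j then -W - ε
  else -C

/-- A pure strategy profile `x` is a Nash equilibrium if no provider can strictly
increase its payoff by unilaterally changing its choice. -/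
noncomputable def IsNash (W C ε : ℝ) {m : ℕ} (x : Fin m → Bool) : Prop :=
  ∀ i : Fin m, ∀ b : Bool,
    slashPayoff W C ε i (Function.update x i b) ≤ slashPayoff W C ε i x

/-- With `C > W + ε > W > 0`, the unique pure-strategy Nash equilibrium is the
profile where every provider responds. -/
theorem unique_nash_all_respond (W C ε : ℝ)
    (hW : 0 < W) (hε : 0 < ε) (hC : W + ε < C)
    {m : ℕ} (x : Fin m → Bool) :
    IsNash W C ε x ↔ ∀ i : Fin m, x i = true := by
  constructor
  · intro h i
    by_contra hx
    have hxi : x i = false := by simpa using hx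
    have := h i true
    have hup : slashPayoff W C ε i (Function.update x i true) = -W := by
      simp [slashPayoff, Function.update_self]
    rw [hup] at this
    rw [slashPayoff, hxi] at this
    simp only [Bool.false_eq_true, if_false] at this
    split_ifs at this with h2 <;> linarith
  · intro h i b
    have hxi : x i = true := h i
    have hx : slashPayoff W C ε i x = -W := by simp [slashPayoff, hxi]
    rw [hx]
    cases b with
    | true =>
      have : Function.update x i true = x := by
        funext j; by_cases hj : j = i
        · subst hj; simp [hxi]
        · simp [Function.update_of_ne hj]
      rw [this, hx]
    | false =>
      rw [slashPayoff]
      simp only [Function.update_self, Bool.false_eq_true, if_false]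
      split_ifs with h2 <;> linarith
end

section
/- In the challenge mechanism, for every client transaction that triggers a challenge, exactly one of the following holds: (a) the challenge is resolved within the timeout τ, in which case at least one uncompromised enclave received and will execute the transaction; or (b) the timeout elapses unresolved, in which case the contract transitions to the Frozen state, where every client holding a valid balance proof can withdraw. Hence redeemability: every deposited balance is eventually redeemable. -/
/-- Challenge mechanism dichotomy and redeemability.  A challenge on a client
transaction is resolved iff a quorum certificate (≥ f+1 of 2f+1 signers, at most f
compromised) is submitted before the timeout; a quorum certificate implies an
uncompromised signer received (and will execute) the transaction.  If the timeout
elapses unresolved, the contract eventually becomes Frozen (main-chain liveness),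
and in the Frozen state every client with positive balance can withdraw (Merkle
balance proofs against the recorded root exist).  Then exactly one of (a)/(b)
holds, and every deposited balance is eventually redeemable. -/
theorem challenge_dichotomy_and_redeemability
    {ι Account : Type*} [DecidableEq ι]
    (f : ℕ) (S C : Finset ι)
    (hS : S.card = 2 * f + 1) (hC : C ⊆ S) (hCcard : C.card ≤ f)
    (signedQC : Finset ι → Prop)      -- `signedQC Q`: every member of Q signed the
                                       -- challenged transaction before the timeout
    (resolved : Prop)
    (hres : resolved ↔ ∃ Q ⊆ S, f + 1 ≤ Q.card ∧ signedQC Q)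
    (received : ι → Prop)              -- the sequencer's enclave received the tx
    (hhonest : ∀ Q : Finset ι, signedQC Q → ∀ p ∈ Q, p ∉ C → received p)
    (frozen : ℕ → Prop)                -- contract is Frozen at a given time
    (hsettle : ¬resolved → ∃ t : ℕ, frozen t)  -- SettleRollup eventually executes
    (balance : Account → ℕ)
    (canWithdraw : Account → Prop)
    (hwithdraw : ∀ t : ℕ, frozen t → ∀ a : Account, 0 < balance a → canWithdraw a)
    (executed : Prop)                  -- the transaction (eventually) gets executed
    (hexec : (∃ p, p ∉ C ∧ received p) → executed) :
    Xor' (resolved ∧ ∃ p, p ∉ C ∧ received p)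
         (¬resolved ∧ ∃ t : ℕ, frozen t ∧ ∀ a : Account, 0 < balance a → canWithdraw a)
    ∧ ∀ a : Account, 0 < balance a → executed ∨ canWithdraw a := by
  have key : resolved → ∃ p, p ∉ C ∧ received p := by
    intro hr
    obtain ⟨Q, hQS, hQcard, hsig⟩ := hres.mp hr
    have h1 : (Q \ C).Nonempty := by
      rw [Finset.sdiff_nonempty]
      intro hsub
      have := Finset.card_le_card hsub
      omega
    obtain ⟨p, hp⟩ := h1
    rw [Finset.mem_sdiff] at hp
    exact ⟨p, hp.2, hhonest Q hsig p hp.1 hp.2⟩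
  constructor
  · by_cases hr : resolved
    · exact Or.inl ⟨⟨hr, key hr⟩, fun h => h.1 hr⟩
    · obtain ⟨t, ht⟩ := hsettle hr
      exact Or.inr ⟨⟨hr, t, ht, fun a ha => hwithdraw t ht a ha⟩, fun h => hr h.1⟩
  · intro a ha
    by_cases hr : resolved
    · exact Or.inl (hexec (key hr))
    · obtain ⟨t, ht⟩ := hsettle hr
      exact Or.inr (hwithdraw t ht a ha)
end
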